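/- arXiv:1509.07760 — 6 statements merged into one kernel-verified Lean document; each statement's English description precedes it below -/
import Mathlib

section
/- Let b = (b_i)_{i∈ℤ} be a biinfinite sequence with every b_i ∈ {0,1}, and let x = (x_j)_{j∈ℤ} ∈ ℓ²(ℤ) with ‖x‖ = 1. Then the complex number z = ⟨A_b x, x⟩ satisfies |z − ⟨A_𝟎 x, x⟩| + |z − 2·Re(⟨A_𝟎 x, x⟩)| < 1; that is, z lies strictly inside the ellipse with focal points ⟨A_𝟎 x, x⟩ and 2·Re(⟨A_𝟎 x, x⟩) and major axis of length 1. -/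
open scoped ComplexConjugate ENNReal
open Filter

noncomputable section

/-- `ℓ²(ℤ)`, the Hilbert space of square-summable biinfinite complex sequences. -/
abbrev Hseq : Type := lp (fun _ : ℤ => ℂ) 2

/-- `A` is the (bounded) tridiagonal operator `A_b` associated to the biinfinite
sequence `b`, i.e. `(A x) j = x (j+1) + b (j-1) * x (j-1)`. -/
def IsTridiag (b : ℤ → ℂ) (A : Hseq →L[ℂ] Hseq) : Prop :=
  ∀ x : Hseq, ∀ j : ℤ,
    (A x : ℤ → ℂ) j = (x : ℤ → ℂ) (j + 1) + b (j - 1) * (x : ℤ → ℂ) (j - 1)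

/-- The numerical range `W(A) = {⟨Ax, x⟩ : ‖x‖ = 1}`, where
`⟨u, v⟩ = ∑ₖ uₖ · conj(vₖ)`; in Mathlib's convention this is `⟪x, A x⟫_ℂ`. -/
def numRange (A : Hseq →L[ℂ] Hseq) : Set ℂ :=
  {z | ∃ x : Hseq, ‖x‖ = 1 ∧ (inner (𝕜 := ℂ) x (A x) : ℂ) = z}

/-- The shift orbit `Orb(b) = {φⁿ(b) : n ∈ ℤ}` where `(φⁿ(b))ᵢ = b_{i+n}`. -/
def shiftOrbit (b : ℤ → ℂ) : Set (ℤ → ℂ) :=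
  {c | ∃ n : ℤ, c = fun i => b (i + n)}

/-! With `c j = conj (x (j + 1)) * x j` one has `⟨A_b x, x⟩ - ⟨A_𝟎 x, x⟩ = ∑ b j * c j` and
`conj ⟨A_𝟎 x, x⟩ = ∑ c j`, so the two focal distances are `‖∑ b j * c j‖` and
`‖∑ (b j - 1) * c j‖`. As `‖b j‖ + ‖b j - 1‖ = 1` for `b j ∈ {0, 1}`, their sum is at most
`∑ ‖x j‖ * ‖x (j + 1)‖`, which by AM-GM is at most `‖x‖ ^ 2 = 1`; equality would force `‖x j‖`
to be constant in `j`, impossible for a nonzero square-summable sequence. -/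

namespace lp

variable {ι : Type*} {E : ι → Type*} [∀ i, NormedAddCommGroup (E i)]

theorem hasSum_norm_sq (x : lp E 2) : HasSum (fun i => ‖x i‖ ^ 2) (‖x‖ ^ 2) := by
  simpa only [ENNReal.toReal_ofNat, Real.rpow_two] using lp.hasSum_norm (p := 2) (by norm_num) x

variable {F : Type*} [NormedAddCommGroup F]

theorem eq_zero_of_norm_succ_eq (x : lp (fun _ : ℤ => F) 2) (h : ∀ j, ‖x (j + 1)‖ = ‖x j‖) :
    x = 0 := by
  have hconst : ∀ j, ‖x j‖ = ‖x 0‖ := by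
    intro j
    induction j using Int.induction_on with
    | zero => rfl
    | succ k ih => rw [h, ih]
    | pred k ih => rw [← ih, ← h, sub_add_cancel]
  have hsum : Summable fun _ : ℤ => ‖x 0‖ ^ 2 :=
    (hasSum_norm_sq x).summable.congr fun j => by rw [hconst]
  have hx0 : ‖x 0‖ = 0 := by simpa using (summable_const_iff _).mp hsum
  ext j
  simpa [← norm_eq_zero, hconst j] using hx0

theorem summable_norm_mul_norm_succ (x : lp (fun _ : ℤ => F) 2) :
    Summable fun j => ‖x j‖ * ‖x (j + 1)‖ := by
  have hsq := (hasSum_norm_sq x).summable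
  have hsq_succ : Summable fun j : ℤ => ‖x (j + 1)‖ ^ 2 :=
    (Equiv.addRight (1 : ℤ)).summable_iff.mpr hsq
  refine (hsq.add hsq_succ).of_nonneg_of_le (fun j => by positivity) fun j => ?_
  nlinarith [sq_nonneg (‖x j‖ - ‖x (j + 1)‖), norm_nonneg (x j), norm_nonneg (x (j + 1))]

theorem tsum_norm_mul_norm_succ_lt (x : lp (fun _ : ℤ => F) 2) (hx : x ≠ 0) :
    ∑' j, ‖x j‖ * ‖x (j + 1)‖ < ‖x‖ ^ 2 := by
  have hsq := hasSum_norm_sq x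
  have hsq_succ : HasSum (fun j => ‖x (j + 1)‖ ^ 2) (‖x‖ ^ 2) :=
    (Equiv.addRight (1 : ℤ)).hasSum_iff.mpr hsq
  have hmean : HasSum (fun j => (‖x j‖ ^ 2 + ‖x (j + 1)‖ ^ 2) / 2) (‖x‖ ^ 2) := by
    simpa using (hsq.add hsq_succ).div_const 2
  have hle : ∀ j, ‖x j‖ * ‖x (j + 1)‖ ≤ (‖x j‖ ^ 2 + ‖x (j + 1)‖ ^ 2) / 2 := fun j => by
    nlinarith [sq_nonneg (‖x j‖ - ‖x (j + 1)‖)]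
  obtain ⟨j, hj⟩ : ∃ j, ‖x j‖ * ‖x (j + 1)‖ < (‖x j‖ ^ 2 + ‖x (j + 1)‖ ^ 2) / 2 := by
    by_contra! h
    refine hx (eq_zero_of_norm_succ_eq x fun j => ?_)
    nlinarith [h j, hle j, sq_nonneg (‖x j‖ - ‖x (j + 1)‖)]
  exact hasSum_lt hle hj (summable_norm_mul_norm_succ x).hasSum hmean

end lp

theorem norm_tsum_mul_add_norm_tsum_mul_sub_tsum_le {ι : Type*} {b c : ι → ℂ}
    (hb : ∀ i, ‖b i‖ + ‖b i - 1‖ ≤ 1) (hc : Summable fun i => ‖c i‖) :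
    ‖∑' i, b i * c i‖ + ‖∑' i, b i * c i - ∑' i, c i‖ ≤ ∑' i, ‖c i‖ := by
  have hbound : ∀ i, ‖b i * c i‖ + ‖(b i - 1) * c i‖ ≤ ‖c i‖ := fun i => by
    rw [norm_mul, norm_mul, ← add_mul]
    exact mul_le_of_le_one_left (norm_nonneg _) (hb i)
  have h₁ : Summable fun i => ‖b i * c i‖ :=
    hc.of_nonneg_of_le (fun _ => norm_nonneg _) fun i => by
      linarith [hbound i, norm_nonneg ((b i - 1) * c i)]
  have h₂ : Summable fun i => ‖(b i - 1) * c i‖ :=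
    hc.of_nonneg_of_le (fun _ => norm_nonneg _) fun i => by
      linarith [hbound i, norm_nonneg (b i * c i)]
  have hsub : ∑' i, b i * c i - ∑' i, c i = ∑' i, (b i - 1) * c i := by
    rw [← h₁.of_norm.tsum_sub hc.of_norm]
    exact tsum_congr fun i => by ring
  rw [hsub]
  calc ‖∑' i, b i * c i‖ + ‖∑' i, (b i - 1) * c i‖
      ≤ ∑' i, ‖b i * c i‖ + ∑' i, ‖(b i - 1) * c i‖ :=
        add_le_add (norm_tsum_le_tsum_norm h₁) (norm_tsum_le_tsum_norm h₂)
    _ = ∑' i, (‖b i * c i‖ + ‖(b i - 1) * c i‖) := (h₁.tsum_add h₂).symm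
    _ ≤ ∑' i, ‖c i‖ := (h₁.add h₂).tsum_le_tsum hbound hc

theorem IsTridiag.inner_sub_inner {b b' : ℤ → ℂ} {A A' : Hseq →L[ℂ] Hseq}
    (hA : IsTridiag b A) (hA' : IsTridiag b' A') (x : Hseq) :
    (inner ℂ x (A x) : ℂ) - inner ℂ x (A' x) =
      ∑' j, (b j - b' j) * (conj (x (j + 1)) * x j) := by
  rw [← inner_sub_right, lp.inner_eq_tsum, ← (Equiv.addRight (1 : ℤ)).tsum_eq]
  refine tsum_congr fun j => ?_
  simp [hA x, hA' x]
  ring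

theorem IsTridiag.inner_apply_self_of_zero {A : Hseq →L[ℂ] Hseq}
    (hA : IsTridiag (fun _ => 0) A) (x : Hseq) :
    (inner ℂ (A x) x : ℂ) = ∑' j, conj (x (j + 1)) * x j := by
  rw [lp.inner_eq_tsum]
  refine tsum_congr fun j => ?_
  simp [hA x, mul_comm]

/-- For `{0,1}`-valued `b` and a unit vector `x`, the value `⟨A_b x, x⟩` lies strictly
inside the ellipse with foci `⟨A_𝟎 x, x⟩` and `2·Re⟨A_𝟎 x, x⟩` and major axis `1`. -/
theorem stmt3 (b : ℤ → ℂ) (hb : ∀ i, b i = 0 ∨ b i = 1)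
    (Ab : Hseq →L[ℂ] Hseq) (hAb : IsTridiag b Ab)
    (A0 : Hseq →L[ℂ] Hseq) (hA0 : IsTridiag (fun _ => (0 : ℂ)) A0)
    (x : Hseq) (hx : ‖x‖ = 1) :
    ‖(inner (𝕜 := ℂ) x (Ab x) : ℂ) - (inner (𝕜 := ℂ) x (A0 x) : ℂ)‖ +
      ‖(inner (𝕜 := ℂ) x (Ab x) : ℂ) -
        (2 * (inner (𝕜 := ℂ) x (A0 x) : ℂ).re : ℂ)‖ < 1 := by
  set c : ℤ → ℂ := fun j => conj (x (j + 1)) * x j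
  have hc : ∀ j, ‖c j‖ = ‖x j‖ * ‖x (j + 1)‖ := fun j => by simp [c, mul_comm]
  have hb_norm : ∀ i, ‖b i‖ + ‖b i - 1‖ ≤ 1 := fun i => by rcases hb i with h | h <;> simp [h]
  have hdiff : inner ℂ x (Ab x) - inner ℂ x (A0 x) = ∑' j, b j * c j := by
    simpa using hAb.inner_sub_inner hA0 x
  have hconj : conj (inner ℂ x (A0 x)) = ∑' j, c j :=
    (inner_conj_symm _ _).trans (hA0.inner_apply_self_of_zero x)
  calc _ = ‖∑' j, b j * c j‖ + ‖∑' j, b j * c j - ∑' j, c j‖ := by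
        rw [Complex.re_eq_add_conj, mul_div_cancel₀ _ two_ne_zero, sub_add_eq_sub_sub, hdiff,
          hconj]
    _ ≤ ∑' j, ‖c j‖ :=
        norm_tsum_mul_add_norm_tsum_mul_sub_tsum_le hb_norm
          ((lp.summable_norm_mul_norm_succ x).congr fun j => (hc j).symm)
    _ = ∑' j, ‖x j‖ * ‖x (j + 1)‖ := tsum_congr hc
    _ < ‖x‖ ^ 2 := lp.tsum_norm_mul_norm_succ_lt x (by rintro rfl; simp at hx)
    _ = 1 := by rw [hx, one_pow]
end
end

section
/- Let b = (b_i)_{i∈ℤ} be a biinfinite sequence with every b_i ∈ {0,1}. Then W(A_b) ⊆ conv(W(A_𝟎) ∪ W(A_𝟏)), the convex hull of the union of the numerical ranges of A_𝟎 and A_𝟏. -/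
open scoped ComplexConjugate ENNReal
open Filter

noncomputable section

/-!
For a unit vector `x` put `e j = conj (x j) * x (j + 1)`. Then
`⟪x, A_b x⟫ = ∑ e j + ∑ b j * conj (e j) = 2 Re u + v` with `u = ∑ b j * e j` and
`v = ∑ (1 - b j) * e j`, and for `b` with values in `[0, 1]` we get
`‖u‖ + ‖v‖ ≤ ∑ ‖x j‖ ‖x (j + 1)‖ < 1`, the last inequality being strict because `‖x j‖` cannot be
constant in `j`. Geometric vectors `x j = c w ^ j` (`j ≥ 0`) show that `W(A_𝟎)` contains the open
unit disc and `W(A_𝟏)` the real interval `(-2, 2)`. Choosing `‖u‖ < t < 1 - ‖v‖`, the point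
`2 Re u + v = t • (2 Re u / t) + (1 - t) • (v / (1 - t))` is a convex combination of a point of
each.
-/

theorem lp.hasSum_norm_sq_s4 {ι : Type*} {E : ι → Type*} [∀ i, NormedAddCommGroup (E i)]
    (x : lp E 2) : HasSum (fun i => ‖x i‖ ^ 2) (‖x‖ ^ 2) := by
  simpa using lp.hasSum_norm (p := 2) (by norm_num) x

theorem lp.memℓp_two_of_summable {ι : Type*} {E : ι → Type*} [∀ i, NormedAddCommGroup (E i)]
    {f : ∀ i, E i} (hf : Summable fun i => ‖f i‖ ^ 2) : Memℓp f 2 :=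
  memℓp_gen (by simpa using hf)

def adjProd (x : ℤ → ℂ) (j : ℤ) : ℂ := conj (x j) * x (j + 1)

theorem summable_norm_adjProd (x : Hseq) : Summable fun j => ‖adjProd x j‖ := by
  have hsq := (lp.hasSum_norm_sq_s4 x).summable
  have hsq' : Summable fun j => ‖x (j + 1)‖ ^ 2 := (Equiv.addRight (1 : ℤ)).summable_iff.2 hsq
  refine Summable.of_nonneg_of_le (fun _ => norm_nonneg _) (fun j => ?_)
    ((hsq.add hsq').div_const 2)
  rw [adjProd, norm_mul, Complex.norm_conj]
  nlinarith [sq_nonneg (‖x j‖ - ‖x (j + 1)‖)]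

theorem exists_norm_ne_norm_add_one {x : Hseq} (hx : x ≠ 0) : ∃ j, ‖x j‖ ≠ ‖x (j + 1)‖ := by
  by_contra! h
  have hconst : ∀ j, ‖x j‖ = ‖x 0‖ := by
    intro j
    induction j using Int.induction_on with
    | zero => rfl
    | succ n ih => rw [← h, ih]
    | pred n ih => rw [h, sub_add_cancel, ih]
  have hsq : Summable fun _ : ℤ => ‖x 0‖ ^ 2 := by
    simpa only [hconst] using (lp.hasSum_norm_sq_s4 x).summable
  rw [summable_const_iff, sq_eq_zero_iff, norm_eq_zero] at hsq
  exact hx (lp.ext (funext fun j => by simpa [hsq] using hconst j))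

theorem tsum_norm_adjProd_lt_one {x : Hseq} (hx : ‖x‖ = 1) : ∑' j, ‖adjProd x j‖ < 1 := by
  have hsq := lp.hasSum_norm_sq_s4 x
  have hsq' : HasSum (fun j => ‖x (j + 1)‖ ^ 2) (‖x‖ ^ 2) :=
    (Equiv.addRight (1 : ℤ)).hasSum_iff.2 hsq
  obtain ⟨j₀, hj₀⟩ := exists_norm_ne_norm_add_one (x := x) (by rintro rfl; simp at hx)
  have hle : ∀ j, ‖adjProd x j‖ ≤ (‖x j‖ ^ 2 + ‖x (j + 1)‖ ^ 2) / 2 := fun j => by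
    rw [adjProd, norm_mul, Complex.norm_conj]
    nlinarith [sq_nonneg (‖x j‖ - ‖x (j + 1)‖)]
  have hlt : ‖adjProd x j₀‖ < (‖x j₀‖ ^ 2 + ‖x (j₀ + 1)‖ ^ 2) / 2 := by
    rw [adjProd, norm_mul, Complex.norm_conj]
    nlinarith [sq_pos_of_ne_zero (sub_ne_zero.2 hj₀)]
  calc ∑' j, ‖adjProd x j‖ < ∑' j, (‖x j‖ ^ 2 + ‖x (j + 1)‖ ^ 2) / 2 :=
        (summable_norm_adjProd x).tsum_lt_tsum hle hlt ((hsq.add hsq').div_const 2).summable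
    _ = 1 := by rw [((hsq.add hsq').div_const 2).tsum_eq, hx]; norm_num

theorem inner_apply_eq_tsum_adjProd {b : ℤ → ℂ} {A : Hseq →L[ℂ] Hseq} (hA : IsTridiag b A)
    (x : Hseq) :
    inner ℂ x (A x) = ∑' j, adjProd x j + ∑' j, b j * conj (adjProd x j) := by
  set g : ℤ → ℂ := fun j => b j * conj (adjProd x j)
  have hterm : ∀ j, inner ℂ (x j) ((A x) j) = adjProd x j + g (j - 1) := fun j => by
    simp only [g, adjProd, hA x j, RCLike.inner_apply, map_mul, Complex.conj_conj, sub_add_cancel]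
    ring
  have hshift : HasSum (fun j => g (j - 1)) (inner ℂ x (A x) - ∑' j, adjProd x j) := by
    simpa only [hterm, add_sub_cancel_left] using
      (lp.hasSum_inner (𝕜 := ℂ) x (A x)).sub (summable_norm_adjProd x).of_norm.hasSum
  have hg : HasSum g (inner ℂ x (A x) - ∑' j, adjProd x j) :=
    (Equiv.subRight (1 : ℤ)).hasSum_iff.1 hshift
  rw [hg.tsum_eq]
  ring

-- Defined through `Int.rec` so that `HasSum.int_rec` reduces its sums to geometric series.
def geomSeq (c : ℝ) (w : ℂ) : ℤ → ℂ := Int.rec (fun n => c * w ^ n) (fun _ => 0)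

theorem hasSum_norm_sq_geomSeq (c : ℝ) {w : ℂ} (hw : ‖w‖ < 1) :
    HasSum (fun j => ‖geomSeq c w j‖ ^ 2) (c ^ 2 / (1 - ‖w‖ ^ 2)) := by
  have hgeom : HasSum (fun n : ℕ => c ^ 2 * (‖w‖ ^ 2) ^ n) (c ^ 2 / (1 - ‖w‖ ^ 2)) := by
    simpa [div_eq_mul_inv] using
      (hasSum_geometric_of_lt_one (by positivity) (by nlinarith [norm_nonneg w])).mul_left (c ^ 2)
  convert hgeom.int_rec (hasSum_zero (α := ℝ)) using 1
  · funext j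
    cases j <;> simp [geomSeq, mul_pow, pow_right_comm]
  · simp

theorem hasSum_adjProd_geomSeq (c : ℝ) {w : ℂ} (hw : ‖w‖ < 1) :
    HasSum (adjProd (geomSeq c w)) (c ^ 2 * w / (1 - ‖w‖ ^ 2)) := by
  have hgeom : HasSum (fun n : ℕ => c ^ 2 * w * ((‖w‖ ^ 2 : ℝ) : ℂ) ^ n)
      (c ^ 2 * w / (1 - ‖w‖ ^ 2)) := by
    have hr : ‖((‖w‖ ^ 2 : ℝ) : ℂ)‖ < 1 := by
      rw [Complex.norm_real, Real.norm_of_nonneg (by positivity)]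
      nlinarith [norm_nonneg w]
    simpa [div_eq_mul_inv] using (hasSum_geometric_of_norm_lt_one hr).mul_left (c ^ 2 * w)
  convert hgeom.int_rec (hasSum_zero (α := ℂ)) using 1
  · funext j
    cases j with
    | ofNat n =>
      show conj (c * w ^ n) * (c * w ^ (n + 1)) = c ^ 2 * w * ((‖w‖ ^ 2 : ℝ) : ℂ) ^ n
      simp only [map_mul, Complex.conj_ofReal, map_pow, Complex.ofReal_pow, ← Complex.conj_mul']
      ring
    | negSucc n => simp [adjProd, geomSeq]
  · simp

theorem exists_norm_eq_one_hasSum_adjProd {w : ℂ} (hw : ‖w‖ < 1) :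
    ∃ x : Hseq, ‖x‖ = 1 ∧ HasSum (adjProd x) w := by
  have hw2 : 0 < 1 - ‖w‖ ^ 2 := by nlinarith [norm_nonneg w]
  set c := Real.sqrt (1 - ‖w‖ ^ 2)
  have hc : c ^ 2 = 1 - ‖w‖ ^ 2 := Real.sq_sqrt hw2.le
  have hnorm := hasSum_norm_sq_geomSeq c hw
  rw [hc, div_self hw2.ne'] at hnorm
  let x : Hseq := ⟨geomSeq c w, lp.memℓp_two_of_summable hnorm.summable⟩
  refine ⟨x, ?_, ?_⟩
  · exact (pow_eq_one_iff_of_nonneg (norm_nonneg x) two_ne_zero).1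
      ((lp.hasSum_norm_sq_s4 x).unique hnorm)
  · convert hasSum_adjProd_geomSeq c hw using 1
    rw [← Complex.ofReal_pow, hc]
    have : (1 - (‖w‖ : ℂ) ^ 2) ≠ 0 := by exact_mod_cast hw2.ne'
    push_cast
    field_simp

theorem add_mul_conj_mem_numRange {β : ℂ} {A : Hseq →L[ℂ] Hseq} (hA : IsTridiag (fun _ => β) A)
    {w : ℂ} (hw : ‖w‖ < 1) : w + β * conj w ∈ numRange A := by
  obtain ⟨x, hx, hsum⟩ := exists_norm_eq_one_hasSum_adjProd hw
  refine ⟨x, hx, ?_⟩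
  rw [inner_apply_eq_tsum_adjProd hA, tsum_mul_left, ← Complex.conj_tsum, hsum.tsum_eq]

theorem ball_subset_numRange {A : Hseq →L[ℂ] Hseq} (hA : IsTridiag (fun _ => 0) A) :
    Metric.ball 0 1 ⊆ numRange A := fun w hw => by
  simpa using add_mul_conj_mem_numRange hA (mem_ball_zero_iff.1 hw)

theorem ofReal_image_Ioo_subset_numRange {A : Hseq →L[ℂ] Hseq} (hA : IsTridiag (fun _ => 1) A) :
    ((↑) : ℝ → ℂ) '' Set.Ioo (-2) 2 ⊆ numRange A := by
  rintro _ ⟨r, hr, rfl⟩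
  have hw : ‖((r / 2 : ℝ) : ℂ)‖ < 1 := by
    rw [Complex.norm_real, Real.norm_eq_abs, abs_lt]
    constructor <;> linarith [hr.1, hr.2]
  convert add_mul_conj_mem_numRange hA hw using 1
  rw [Complex.conj_ofReal]
  push_cast
  ring

theorem two_mul_re_add_mem_convexHull {u v : ℂ} (h : ‖u‖ + ‖v‖ < 1) :
    2 * (u.re : ℂ) + v ∈ convexHull ℝ (Metric.ball 0 1 ∪ ((↑) : ℝ → ℂ) '' Set.Ioo (-2) 2) := by
  obtain ⟨t, hut, hvt⟩ := exists_between (lt_sub_iff_add_lt.2 h)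
  replace hvt : ‖v‖ < 1 - t := by linarith
  have ht : 0 < t := (norm_nonneg u).trans_lt hut
  have ht' : 0 < 1 - t := (norm_nonneg v).trans_lt hvt
  have hre : (2 * u.re / t : ℝ) ∈ Set.Ioo (-2) 2 := by
    rw [Set.mem_Ioo, lt_div_iff₀ ht, div_lt_iff₀ ht]
    constructor <;> linarith [neg_abs_le u.re, le_abs_self u.re, Complex.abs_re_le_norm u]
  have hv : v / (1 - t : ℝ) ∈ Metric.ball (0 : ℂ) 1 := by
    rw [mem_ball_zero_iff, norm_div, Complex.norm_real, Real.norm_of_nonneg ht'.le,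
      div_lt_one ht']
    exact hvt
  set s : Set ℂ := Metric.ball 0 1 ∪ ((↑) : ℝ → ℂ) '' Set.Ioo (-2) 2
  have hmem := convex_convexHull ℝ s (subset_convexHull ℝ s (Or.inr ⟨_, hre, rfl⟩))
    (subset_convexHull ℝ s (Or.inl hv)) ht.le ht'.le (add_sub_cancel t 1)
  convert hmem using 1
  have ht₀ : (t : ℂ) ≠ 0 := by exact_mod_cast ht.ne'
  have ht₁ : ((1 - t : ℝ) : ℂ) ≠ 0 := by exact_mod_cast ht'.ne'
  rw [Complex.real_smul, Complex.real_smul, mul_div_cancel₀ _ ht₁]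
  push_cast
  rw [mul_div_cancel₀ _ ht₀]

theorem exists_tsum_add_mul_conj_eq {b : ℤ → ℝ} (hb : ∀ i, b i ∈ Set.Icc 0 1) {e : ℤ → ℂ}
    (he : Summable fun j => ‖e j‖) :
    ∃ u v : ℂ, ‖u‖ + ‖v‖ ≤ ∑' j, ‖e j‖ ∧
      ∑' j, e j + ∑' j, (b j : ℂ) * conj (e j) = 2 * (u.re : ℂ) + v := by
  have hnorm_b : ∀ j, ‖(b j : ℂ) * e j‖ = b j * ‖e j‖ := fun j => by
    rw [norm_mul, Complex.norm_real, Real.norm_of_nonneg (hb j).1]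
  have hnorm_b' : ∀ j, ‖((1 - b j : ℝ) : ℂ) * e j‖ = (1 - b j) * ‖e j‖ := fun j => by
    rw [norm_mul, Complex.norm_real, Real.norm_of_nonneg (sub_nonneg.2 (hb j).2)]
  have hsum_b : Summable fun j => b j * ‖e j‖ := he.of_nonneg_of_le
    (fun j => mul_nonneg (hb j).1 (norm_nonneg _))
    (fun j => mul_le_of_le_one_left (norm_nonneg _) (hb j).2)
  have hsum_b' : Summable fun j => (1 - b j) * ‖e j‖ := by
    simpa only [sub_mul, one_mul] using he.sub hsum_b
  have hu := (hsum_b.congr fun j => (hnorm_b j).symm).of_norm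
  have hv := (hsum_b'.congr fun j => (hnorm_b' j).symm).of_norm
  refine ⟨∑' j, (b j : ℂ) * e j, ∑' j, ((1 - b j : ℝ) : ℂ) * e j, ?_, ?_⟩
  · calc ‖∑' j, (b j : ℂ) * e j‖ + ‖∑' j, ((1 - b j : ℝ) : ℂ) * e j‖
        ≤ ∑' j, b j * ‖e j‖ + ∑' j, (1 - b j) * ‖e j‖ := by
          gcongr
          · exact (norm_tsum_le_tsum_norm hu.norm).trans_eq (tsum_congr hnorm_b)
          · exact (norm_tsum_le_tsum_norm hv.norm).trans_eq (tsum_congr hnorm_b')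
      _ = ∑' j, ‖e j‖ := by
          rw [← hsum_b.tsum_add hsum_b']
          exact tsum_congr fun j => by ring
  · have hsplit : ∑' j, e j = ∑' j, (b j : ℂ) * e j + ∑' j, ((1 - b j : ℝ) : ℂ) * e j := by
      rw [← hu.tsum_add hv]
      exact tsum_congr fun j => by push_cast; ring
    have hconj : ∑' j, (b j : ℂ) * conj (e j) = conj (∑' j, (b j : ℂ) * e j) := by
      rw [Complex.conj_tsum]
      simp only [map_mul, Complex.conj_ofReal]
    rw [hsplit, hconj, add_right_comm, Complex.add_conj]
    push_cast
    ring

theorem numRange_subset_convexHull_of_mem_Icc (b : ℤ → ℝ) (hb : ∀ i, b i ∈ Set.Icc 0 1)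
    {Ab A0 A1 : Hseq →L[ℂ] Hseq} (hAb : IsTridiag (fun i => b i) Ab)
    (hA0 : IsTridiag (fun _ => 0) A0) (hA1 : IsTridiag (fun _ => 1) A1) :
    numRange Ab ⊆ convexHull ℝ (numRange A0 ∪ numRange A1) := by
  rintro _ ⟨x, hx, rfl⟩
  obtain ⟨u, v, huv, hz⟩ := exists_tsum_add_mul_conj_eq hb (summable_norm_adjProd x)
  rw [inner_apply_eq_tsum_adjProd hAb, hz]
  refine convexHull_mono (Set.union_subset_union (ball_subset_numRange hA0)
    (ofReal_image_Ioo_subset_numRange hA1)) (two_mul_re_add_mem_convexHull ?_)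
  exact huv.trans_lt (tsum_norm_adjProd_lt_one hx)

/-- For `{0,1}`-valued `b`, `W(A_b) ⊆ conv(W(A_𝟎) ∪ W(A_𝟏))`. -/
theorem stmt4 (b : ℤ → ℂ) (hb : ∀ i, b i = 0 ∨ b i = 1)
    (Ab : Hseq →L[ℂ] Hseq) (hAb : IsTridiag b Ab)
    (A0 : Hseq →L[ℂ] Hseq) (hA0 : IsTridiag (fun _ => (0 : ℂ)) A0)
    (A1 : Hseq →L[ℂ] Hseq) (hA1 : IsTridiag (fun _ => (1 : ℂ)) A1) :
    numRange Ab ⊆ convexHull ℝ (numRange A0 ∪ numRange A1) := by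
  have hb_re : b = fun i => ((b i).re : ℂ) := funext fun i => by rcases hb i with h | h <;> simp [h]
  rw [hb_re] at hAb
  refine numRange_subset_convexHull_of_mem_Icc _ (fun i => ?_) hAb hA0 hA1
  rcases hb i with h | h <;> simp [h]
end
end

section
/- Let b = (b_i)_{i∈ℤ} be a biinfinite sequence with every b_i ∈ {0,1}. If the constant sequence 𝟎 belongs to the closure of the shift orbit of b (in the product topology on {0,1}^ℤ), then the open unit disk {z ∈ ℂ : |z| < 1} is contained in W(A_b). -/
open scoped ComplexConjugate ENNReal
open Filter

noncomputable section

/-!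
Since `b` is `{0,1}`-valued and `𝟎` lies in its orbit closure, `b` vanishes on arbitrarily long
blocks `b_n = ⋯ = b_{n+N-1} = 0`. For `x` supported on `n, …, n + N` the `b`-terms of `⟨A_b x, x⟩`
then drop out, leaving `∑ x_{n+j+1} conj x_{n+j}`. The geometric vector `x_{n+j} = (s e^{iθ})^j`
gives `⟨A_b x, x⟩ / ‖x‖² = e^{iθ} s ∑_{j<N} s^{2j} / ∑_{j≤N} s^{2j}`, and this ratio runs
continuously from `0` to `N / (N + 1)` as `s` goes from `0` to `1`; for `N` large it reaches every
modulus `|z| < 1`.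
-/

open scoped InnerProductSpace

lemma exists_mul_geom_sum_eq_mul_geom_sum_succ {r : ℝ} (hr0 : 0 ≤ r) (hr1 : r < 1) :
    ∃ N : ℕ, ∃ s : ℝ, 0 ≤ s ∧
      s * ∑ j ∈ Finset.range N, (s ^ 2) ^ j = r * ∑ j ∈ Finset.range (N + 1), (s ^ 2) ^ j := by
  obtain ⟨N, hN⟩ := exists_nat_one_div_lt (sub_pos.2 hr1)
  have hrN : r * (N + 1) ≤ N := by
    rw [div_lt_iff₀ (by positivity)] at hN
    linarith
  let f : ℝ → ℝ := fun s =>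
    s * ∑ j ∈ Finset.range N, (s ^ 2) ^ j - r * ∑ j ∈ Finset.range (N + 1), (s ^ 2) ^ j
  have hf0 : f 0 ≤ 0 := by simp [f, Finset.sum_range_succ', hr0]
  have hf1 : 0 ≤ f 1 := by simp [f]; linarith
  obtain ⟨s, ⟨hs0, -⟩, hfs⟩ := intermediate_value_Icc zero_le_one
    (by fun_prop : Continuous f).continuousOn ⟨hf0, hf1⟩
  exact ⟨N, s, hs0, sub_eq_zero.1 hfs⟩

lemma exists_norm_lt_of_zero_mem_closure_shiftOrbit {b : ℤ → ℂ}
    (h0 : (fun _ : ℤ => (0 : ℂ)) ∈ closure (shiftOrbit b)) (N : ℕ) {ε : ℝ} (hε : 0 < ε) :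
    ∃ n : ℤ, ∀ j < N, ‖b (n + j)‖ < ε := by
  have hU : (Set.Ico (0 : ℤ) N).pi (fun _ => Metric.ball (0 : ℂ) ε) ∈
      nhds (fun _ : ℤ => (0 : ℂ)) :=
    set_pi_mem_nhds (Set.finite_Ico _ _) fun _ _ => Metric.ball_mem_nhds _ hε
  obtain ⟨_, hcU, n, rfl⟩ := mem_closure_iff_nhds.1 h0 _ hU
  refine ⟨n, fun j hj => ?_⟩
  simpa [add_comm] using hcU j ⟨by positivity, by exact_mod_cast hj⟩

lemma exists_eq_zero_of_zero_mem_closure_shiftOrbit {b : ℤ → ℂ} (hb : ∀ i, b i = 0 ∨ b i = 1)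
    (h0 : (fun _ : ℤ => (0 : ℂ)) ∈ closure (shiftOrbit b)) (N : ℕ) :
    ∃ n : ℤ, ∀ j < N, b (n + j) = 0 := by
  obtain ⟨n, hn⟩ := exists_norm_lt_of_zero_mem_closure_shiftOrbit h0 N one_pos
  refine ⟨n, fun j hj => (hb _).resolve_right fun h1 => ?_⟩
  simpa [h1] using hn j hj

lemma mem_numRange_of_inner_eq_mul_norm_sq {A : Hseq →L[ℂ] Hseq} {x : Hseq} (hx : x ≠ 0)
    {z : ℂ} (h : ⟪x, A x⟫_ℂ = z * (‖x‖ ^ 2 : ℝ)) : z ∈ numRange A := by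
  have hx' : (‖x‖ : ℂ) ≠ 0 := by exact_mod_cast norm_ne_zero_iff.2 hx
  refine ⟨(‖x‖⁻¹ : ℂ) • x, norm_smul_inv_norm hx, ?_⟩
  rw [map_smul, inner_smul_left, inner_smul_right, h]
  simp only [map_inv₀, Complex.conj_ofReal, Complex.ofReal_pow]
  field_simp

def blockVec (n : ℤ) (N : ℕ) (c : ℕ → ℂ) : Hseq :=
  ∑ j ∈ Finset.range (N + 1), lp.single 2 (n + j) (c j)

section blockVec

variable (n : ℤ) (N : ℕ) (c : ℕ → ℂ)

lemma blockVec_apply (k : ℤ) :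
    (blockVec n N c : ℤ → ℂ) k = ∑ j ∈ Finset.range (N + 1), if k = n + j then c j else 0 := by
  simp only [blockVec, lp.coeFn_sum, Finset.sum_apply, lp.single_apply, Pi.single_apply]

lemma blockVec_apply_add (j : ℕ) :
    (blockVec n N c : ℤ → ℂ) (n + j) = if j ≤ N then c j else 0 := by
  simp [blockVec_apply]

lemma blockVec_apply_sub_one : (blockVec n N c : ℤ → ℂ) (n - 1) = 0 := by
  rw [blockVec_apply]
  exact Finset.sum_eq_zero fun j _ => if_neg (by omega)

lemma inner_blockVec_left (y : Hseq) :
    ⟪blockVec n N c, y⟫_ℂ = ∑ j ∈ Finset.range (N + 1), conj (c j) * (y : ℤ → ℂ) (n + j) := by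
  simp only [blockVec, sum_inner, lp.inner_single_left, RCLike.inner_apply']

lemma norm_blockVec_sq : ‖blockVec n N c‖ ^ 2 = ∑ j ∈ Finset.range (N + 1), ‖c j‖ ^ 2 := by
  have h : ⟪blockVec n N c, blockVec n N c⟫_ℂ =
      ((∑ j ∈ Finset.range (N + 1), ‖c j‖ ^ 2 : ℝ) : ℂ) := by
    rw [inner_blockVec_left]
    push_cast
    refine Finset.sum_congr rfl fun j hj => ?_
    rw [blockVec_apply_add, if_pos (Nat.lt_succ_iff.1 (Finset.mem_range.1 hj)), Complex.conj_mul']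
  rw [← inner_self_eq_norm_sq (𝕜 := ℂ), h]
  exact Complex.ofReal_re _

lemma inner_blockVec_apply_blockVec {b : ℤ → ℂ} {A : Hseq →L[ℂ] Hseq} (hA : IsTridiag b A)
    (hb : ∀ j < N, b (n + j) = 0) :
    ⟪blockVec n N c, A (blockVec n N c)⟫_ℂ = ∑ j ∈ Finset.range N, conj (c j) * c (j + 1) := by
  have hAx : ∀ j ≤ N, (A (blockVec n N c) : ℤ → ℂ) (n + j) = if j < N then c (j + 1) else 0 := by
    intro j hj
    have hleft : b (n + j - 1) * (blockVec n N c : ℤ → ℂ) (n + j - 1) = 0 := by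
      rcases j with _ | i
      · simp [blockVec_apply_sub_one]
      · rw [show n + ↑(i + 1) - 1 = n + i by push_cast; ring, hb i (by omega), zero_mul]
    rw [hA, hleft, add_zero, add_assoc, ← Nat.cast_add_one, blockVec_apply_add]
    simp only [Nat.succ_le_iff]
  rw [inner_blockVec_left, Finset.sum_range_succ, hAx N le_rfl, if_neg (lt_irrefl N), mul_zero,
    add_zero]
  refine Finset.sum_congr rfl fun j hj => ?_
  have hj := Finset.mem_range.1 hj
  rw [hAx j hj.le, if_pos hj]

end blockVec

lemma sum_conj_pow_mul_pow_succ (t : ℂ) (N : ℕ) :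
    ∑ j ∈ Finset.range N, conj (t ^ j) * t ^ (j + 1) =
      t * ((∑ j ∈ Finset.range N, (‖t‖ ^ 2) ^ j : ℝ) : ℂ) := by
  push_cast
  rw [Finset.mul_sum]
  refine Finset.sum_congr rfl fun j _ => ?_
  rw [← Complex.conj_mul', map_pow, mul_pow]
  ring

/-- If the constant sequence `𝟎` lies in the closure of the shift orbit of the
`{0,1}`-valued sequence `b`, then the open unit disk is contained in `W(A_b)`. -/
theorem stmt5 (b : ℤ → ℂ) (hb : ∀ i, b i = 0 ∨ b i = 1)
    (Ab : Hseq →L[ℂ] Hseq) (hAb : IsTridiag b Ab)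
    (h0 : (fun _ : ℤ => (0 : ℂ)) ∈ closure (shiftOrbit b)) :
    {z : ℂ | ‖z‖ < 1} ⊆ numRange Ab := by
  intro z hz
  obtain ⟨N, s, hs, hsN⟩ := exists_mul_geom_sum_eq_mul_geom_sum_succ (norm_nonneg z) hz
  obtain ⟨n, hbn⟩ := exists_eq_zero_of_zero_mem_closure_shiftOrbit hb h0 N
  set u : ℂ := Complex.exp (z.arg * Complex.I)
  set t : ℂ := s * u
  have ht : ‖t‖ = s := by simp [t, u, Complex.norm_exp_ofReal_mul_I, abs_of_nonneg hs]
  have hx : ‖blockVec n N (t ^ ·)‖ ^ 2 = ∑ j ∈ Finset.range (N + 1), (s ^ 2) ^ j := by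
    simp only [norm_blockVec_sq, norm_pow, ← pow_mul, ht, mul_comm]
  refine mem_numRange_of_inner_eq_mul_norm_sq (x := blockVec n N (t ^ ·)) ?_ ?_
  · rw [← norm_ne_zero_iff, ← pow_ne_zero_iff two_ne_zero, hx, Finset.sum_range_succ']
    positivity
  · rw [inner_blockVec_apply_blockVec n N _ hAb hbn, sum_conj_pow_mul_pow_succ, hx, ht]
    calc t * ((∑ j ∈ Finset.range N, (s ^ 2) ^ j : ℝ) : ℂ)
        = u * ((s * ∑ j ∈ Finset.range N, (s ^ 2) ^ j : ℝ) : ℂ) := by push_cast; ring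
      _ = z * ((∑ j ∈ Finset.range (N + 1), (s ^ 2) ^ j : ℝ) : ℂ) := by
        rw [hsN, Complex.ofReal_mul]
        linear_combination
          ((∑ j ∈ Finset.range (N + 1), (s ^ 2) ^ j : ℝ) : ℂ) * Complex.norm_mul_exp_arg_mul_I z
end
end

section
/- Let b = (b_i)_{i∈ℤ} be a biinfinite sequence with every b_i ∈ {0,1}. If the constant sequence 𝟏 belongs to the closure of the shift orbit of b (in the product topology on {0,1}^ℤ), then the set {z ∈ ℂ : Im z = 0 and −2 < Re z < 2} is contained in W(A_b). -/
open scoped ComplexConjugate ENNReal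
open Filter

noncomputable section

/-
On a unit vector `x` supported on `m + 1` consecutive sites, across which `b` equals `1`, the
operator `A_b` acts as the adjacency matrix of a path: `⟪x, A_b x⟫ = ∑ₖ (x̄ₖ xₖ₊₁ + x̄ₖ₊₁ xₖ)`.
For the plane wave `xₖ = e^{ikθ} / √(m+1)` every term `x̄ₖ xₖ₊₁` equals `e^{iθ} / (m+1)`, so the
value is `2m/(m+1) · cos θ`; these intervals `[-2m/(m+1), 2m/(m+1)]` exhaust `(-2, 2)`.
Runs of `1`s of every length occur in `b` because `𝟏` is a pointwise limit of shifts of the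
`{0,1}`-valued sequence `b`.
-/

theorem exists_shift_dist_lt_of_mem_closure_shiftOrbit {b c : ℤ → ℂ}
    (hc : c ∈ closure (shiftOrbit b)) (s : Finset ℤ) {ε : ℝ} (hε : 0 < ε) :
    ∃ n : ℤ, ∀ i ∈ s, dist (b (i + n)) (c i) < ε := by
  have hopen : IsOpen {d : ℤ → ℂ | ∀ i ∈ s, dist (d i) (c i) < ε} := by
    simp only [Set.ofPred_forall]
    exact isOpen_biInter_finset fun i _ => isOpen_lt (by fun_prop) continuous_const
  obtain ⟨_, hd, n, rfl⟩ := mem_closure_iff.mp hc _ hopen fun i _ => by simpa using hε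
  exact ⟨n, hd⟩

theorem exists_run_eq_one_of_one_mem_closure_shiftOrbit {b : ℤ → ℂ} (hb : ∀ i, b i = 0 ∨ b i = 1)
    (h1 : (fun _ : ℤ => (1 : ℂ)) ∈ closure (shiftOrbit b)) (m : ℕ) :
    ∃ n : ℤ, ∀ k < m, b (n + k) = 1 := by
  obtain ⟨n, hn⟩ := exists_shift_dist_lt_of_mem_closure_shiftOrbit h1
    ((Finset.range m).image Nat.cast) one_pos
  refine ⟨n, fun k hk => ?_⟩
  have hdist := hn k (Finset.mem_image_of_mem _ (Finset.mem_range.2 hk))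
  rw [add_comm]
  rcases hb (k + n) with h | h
  · simp [h] at hdist
  · exact h

def windowVec (n : ℤ) (N : ℕ) (v : ℕ → ℂ) : Hseq :=
  ∑ k ∈ Finset.range N, lp.single 2 (n + k) (v k)

section windowVec

variable (n : ℤ) (N : ℕ) (v : ℕ → ℂ)

theorem windowVec_apply (j : ℤ) :
    (windowVec n N v : ℤ → ℂ) j = ∑ k ∈ Finset.range N, if n + k = j then v k else 0 := by
  rw [windowVec, lp.coeFn_sum, Finset.sum_apply]
  refine Finset.sum_congr rfl fun k _ => ?_
  simp [Pi.single_apply, eq_comm]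

theorem windowVec_apply_add {k : ℕ} (hk : k < N) : (windowVec n N v : ℤ → ℂ) (n + k) = v k := by
  rw [windowVec_apply, Finset.sum_eq_single k (fun i _ hi => if_neg (by omega))
    (fun h => absurd (Finset.mem_range.2 hk) h), if_pos rfl]

theorem windowVec_apply_eq_zero {j : ℤ} (hj : j < n ∨ n + N ≤ j) :
    (windowVec n N v : ℤ → ℂ) j = 0 := by
  rw [windowVec_apply]
  exact Finset.sum_eq_zero fun k hk => if_neg (by simp at hk; omega)

theorem inner_windowVec_left (y : Hseq) :
    inner ℂ (windowVec n N v) y = ∑ k ∈ Finset.range N, conj (v k) * (y : ℤ → ℂ) (n + k) := by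
  simp [windowVec, lp.inner_single_left, mul_comm]

theorem inner_windowVec_self :
    inner ℂ (windowVec n N v) (windowVec n N v) = ∑ k ∈ Finset.range N, conj (v k) * v k := by
  rw [inner_windowVec_left]
  exact Finset.sum_congr rfl fun k hk => by rw [windowVec_apply_add n N v (Finset.mem_range.1 hk)]

end windowVec

theorem inner_windowVec_apply_of_isTridiag {b : ℤ → ℂ} {A : Hseq →L[ℂ] Hseq} (hA : IsTridiag b A)
    {n : ℤ} {m : ℕ} (hb : ∀ k < m, b (n + k) = 1) (v : ℕ → ℂ) :
    inner ℂ (windowVec n (m + 1) v) (A (windowVec n (m + 1) v)) =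
      ∑ k ∈ Finset.range m, (conj (v k) * v (k + 1) + conj (v (k + 1)) * v k) := by
  rw [inner_windowVec_left]
  simp_rw [hA (windowVec n (m + 1) v), mul_add, Finset.sum_add_distrib]
  congr 1
  · rw [Finset.sum_range_succ, windowVec_apply_eq_zero _ _ _ (by omega), mul_zero, add_zero]
    refine Finset.sum_congr rfl fun k hk => ?_
    rw [add_assoc, ← Nat.cast_add_one, windowVec_apply_add _ _ _ (by simp at hk; omega)]
  · rw [Finset.sum_range_succ', windowVec_apply_eq_zero _ _ _ (by omega), mul_zero, mul_zero,
      add_zero]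
    refine Finset.sum_congr rfl fun k hk => ?_
    have hk : k < m := Finset.mem_range.1 hk
    rw [Nat.cast_add_one, ← add_assoc, add_sub_cancel_right, hb k hk, one_mul,
      windowVec_apply_add _ _ _ (by omega)]

theorem conj_exp_mul_I_mul_exp_mul_I (s t : ℝ) :
    conj (Complex.exp (s * Complex.I)) * Complex.exp (t * Complex.I) =
      Complex.exp ((t - s : ℝ) * Complex.I) := by
  rw [← Complex.exp_conj, ← Complex.exp_add]
  congr 1
  simp [Complex.conj_ofReal]
  ring

theorem exists_norm_eq_one_inner_apply_eq_of_isTridiag {b : ℤ → ℂ} {A : Hseq →L[ℂ] Hseq}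
    (hA : IsTridiag b A) {n : ℤ} {m : ℕ} (hb : ∀ k < m, b (n + k) = 1) (θ : ℝ) :
    ∃ x : Hseq, ‖x‖ = 1 ∧ inner ℂ x (A x) = ((2 * m / (m + 1) * Real.cos θ : ℝ) : ℂ) := by
  set c : ℝ := (Real.sqrt (m + 1))⁻¹
  have hc : c ^ 2 = (m + 1 : ℝ)⁻¹ := by
    rw [inv_pow, Real.sq_sqrt (by positivity)]
  set v : ℕ → ℂ := fun k => c * Complex.exp ((k * θ : ℝ) * Complex.I)
  have hv : ∀ j k : ℕ,
      conj (v j) * v k = c ^ 2 * Complex.exp (((k - j : ℝ) * θ : ℝ) * Complex.I) := by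
    intro j k
    simp only [v, map_mul, Complex.conj_ofReal]
    rw [mul_mul_mul_comm, conj_exp_mul_I_mul_exp_mul_I, sub_mul]
    push_cast
    ring
  refine ⟨windowVec n (m + 1) v, ?_, ?_⟩
  · have hself : inner ℂ (windowVec n (m + 1) v) (windowVec n (m + 1) v) = 1 := by
      simp only [inner_windowVec_self, hv, sub_self, zero_mul, Complex.ofReal_zero,
        Complex.exp_zero, mul_one, Finset.sum_const, Finset.card_range, nsmul_eq_mul]
      rw [← Complex.ofReal_pow, hc]
      push_cast
      field_simp
    rw [norm_eq_sqrt_re_inner (𝕜 := ℂ), hself, RCLike.one_re, Real.sqrt_one]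
  · rw [inner_windowVec_apply_of_isTridiag hA hb]
    simp only [hv, Nat.cast_add_one, add_sub_cancel_left, sub_add_cancel_left, ← mul_add,
      Finset.sum_const, Finset.card_range, nsmul_eq_mul]
    push_cast
    rw [one_mul, neg_one_mul, ← Complex.two_cos, ← Complex.ofReal_pow, hc]
    push_cast
    field_simp

theorem exists_nat_abs_le_two_mul_div {t : ℝ} (ht : |t| < 2) :
    ∃ m : ℕ, 0 < m ∧ |t| ≤ 2 * m / (m + 1) := by
  obtain ⟨m, hm⟩ := exists_nat_gt (|t| / (2 - |t|))
  have hpos : (0 : ℝ) < m := lt_of_le_of_lt (div_nonneg (abs_nonneg t) (by linarith)) hm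
  refine ⟨m, by exact_mod_cast hpos, ?_⟩
  rw [div_lt_iff₀ (by linarith)] at hm
  rw [le_div_iff₀ (by positivity)]
  linarith

/-- If the constant sequence `𝟏` lies in the closure of the shift orbit of the
`{0,1}`-valued sequence `b`, then the open interval `(-2,2) ⊆ ℝ ⊆ ℂ` is contained
in `W(A_b)`. -/
theorem stmt6 (b : ℤ → ℂ) (hb : ∀ i, b i = 0 ∨ b i = 1)
    (Ab : Hseq →L[ℂ] Hseq) (hAb : IsTridiag b Ab)
    (h1 : (fun _ : ℤ => (1 : ℂ)) ∈ closure (shiftOrbit b)) :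
    {z : ℂ | z.im = 0 ∧ -2 < z.re ∧ z.re < 2} ⊆ numRange Ab := by
  rintro z ⟨him, hlo, hhi⟩
  obtain ⟨m, hm, hle⟩ := exists_nat_abs_le_two_mul_div (abs_lt.2 ⟨hlo, hhi⟩)
  obtain ⟨n, hn⟩ := exists_run_eq_one_of_one_mem_closure_shiftOrbit hb h1 m
  set r : ℝ := 2 * m / (m + 1)
  have hr : 0 < r := by positivity
  have hcos : |z.re / r| ≤ 1 := by rwa [abs_div, abs_of_pos hr, div_le_one hr]
  obtain ⟨x, hx, hAx⟩ :=
    exists_norm_eq_one_inner_apply_eq_of_isTridiag hAb hn (Real.arccos (z.re / r))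
  refine ⟨x, hx, ?_⟩
  rw [hAx, Real.cos_arccos (abs_le.1 hcos).1 (abs_le.1 hcos).2, mul_div_cancel₀ _ hr.ne']
  exact Complex.ext rfl him.symm
end
end

section
/- Let 𝒜 be a finite set of complex numbers and let b be a biinfinite sequence with entries in 𝒜. If d belongs to X_b, the closure of the shift orbit of b, then W(A_d) ⊆ closure(W(A_b)) and σ(A_d) ⊆ closure(W(A_b)). -/
open scoped ComplexConjugate ENNReal
open Filter

noncomputable section

/-! Because the alphabet is finite, `d ∈ X_b` means that every finite window of `d` occurs
somewhere in `b`. For finitely supported `x` the form `⟪x, A_d x⟫` reads `d` only on a window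
around the support of `x`, so a translate of `x` gives the same value for `A_b`; finitely supported
unit vectors are dense in the unit sphere, which gives `W(A_d) ⊆ closure W(A_b)`.
The spectral inclusion is then the general fact `σ(A) ⊆ closure W(A)`: if `z` has distance `ε`
from `W(A)`, then `‖⟪x, (z - A) x⟫‖ ≥ ε ‖x‖²`, so `z - A` is bounded below and has dense range. -/

open scoped InnerProductSpace

section NumericalRange

variable {𝕜 E : Type*} [RCLike 𝕜] [NormedAddCommGroup E] [InnerProductSpace 𝕜 E]

def numericalRange (A : E →L[𝕜] E) : Set 𝕜 :=
  {z | ∃ x : E, ‖x‖ = 1 ∧ ⟪x, A x⟫_𝕜 = z}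

lemma inner_smul_inv_norm_apply (A : E →L[𝕜] E) (x : E) :
    ⟪(‖x‖⁻¹ : 𝕜) • x, A ((‖x‖⁻¹ : 𝕜) • x)⟫_𝕜 = ⟪x, A x⟫_𝕜 / (‖x‖ : 𝕜) ^ 2 := by
  rw [map_smul, inner_smul_left, inner_smul_right, RCLike.conj_inv, RCLike.conj_ofReal]
  ring

lemma isUnit_of_mul_norm_sq_le_norm_inner [CompleteSpace E] (B : E →L[𝕜] E) {ε : ℝ}
    (hε : 0 < ε) (hB : ∀ x, ε * ‖x‖ ^ 2 ≤ ‖⟪x, B x⟫_𝕜‖) : IsUnit B := by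
  have hbelow : ∀ x, ε * ‖x‖ ≤ ‖B x‖ := by
    intro x
    rcases (norm_nonneg x).eq_or_lt with hx | hx
    · rw [← hx, mul_zero]; exact norm_nonneg _
    · have := (hB x).trans (norm_inner_le_norm x (B x))
      nlinarith
  have hanti : AntilipschitzWith (Real.toNNReal ε)⁻¹ B :=
    B.antilipschitz_of_bound fun x => by
      rw [NNReal.coe_inv, Real.coe_toNNReal _ hε.le, le_inv_mul_iff₀ hε]
      exact hbelow x
  have hdense : Dense (Set.range B) := by
    change Dense (LinearMap.range (B : E →ₗ[𝕜] E) : Set E)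
    rw [Submodule.dense_iff_topologicalClosure_eq_top,
      Submodule.topologicalClosure_eq_top_iff, Submodule.eq_bot_iff]
    intro y hy
    have hperp : ⟪y, B y⟫_𝕜 = 0 :=
      Submodule.inner_left_of_mem_orthogonal (LinearMap.mem_range_self _ y) hy
    have := hB y
    rw [hperp, norm_zero] at this
    by_contra hy0
    linarith [mul_pos hε (pow_pos (norm_pos_iff.2 hy0) 2)]
  refine ContinuousLinearMap.isUnit_iff_bijective.2 ⟨hanti.injective, ?_⟩
  rw [← Set.range_eq_univ, ← (hanti.isClosed_range B.uniformContinuous).closure_eq,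
    hdense.closure_eq]

lemma spectrum_subset_closure_numericalRange [CompleteSpace E] (A : E →L[𝕜] E) :
    spectrum 𝕜 A ⊆ closure (numericalRange A) := by
  intro z hz
  by_contra hzW
  obtain ⟨ε, hε, hsep⟩ : ∃ ε > 0, ∀ w ∈ numericalRange A, ε ≤ dist z w := by
    simpa [Metric.mem_closure_iff] using hzW
  refine spectrum.mem_iff.1 hz (isUnit_of_mul_norm_sq_le_norm_inner _ hε fun x => ?_)
  rcases eq_or_ne x 0 with rfl | hx
  · simp
  have hnorm : (‖x‖ : 𝕜) ^ 2 ≠ 0 := by simpa using hx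
  have hinner : ⟪x, (algebraMap 𝕜 (E →L[𝕜] E) z - A) x⟫_𝕜
      = (z - ⟪x, A x⟫_𝕜 / (‖x‖ : 𝕜) ^ 2) * (‖x‖ : 𝕜) ^ 2 := by
    rw [sub_mul, div_mul_cancel₀ _ hnorm, sub_apply, inner_sub_right,
      Algebra.algebraMap_eq_smul_one, smul_apply,
      one_apply_eq_self, inner_smul_right, inner_self_eq_norm_sq_to_K]
  calc ε * ‖x‖ ^ 2 ≤ dist z (⟪x, A x⟫_𝕜 / (‖x‖ : 𝕜) ^ 2) * ‖x‖ ^ 2 := by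
        gcongr; exact hsep _ ⟨_, norm_smul_inv_norm hx, inner_smul_inv_norm_apply A x⟩
    _ = ‖⟪x, (algebraMap 𝕜 (E →L[𝕜] E) z - A) x⟫_𝕜‖ := by
      rw [hinner, norm_mul, dist_eq_norm, norm_pow, RCLike.norm_ofReal, abs_norm]

lemma numericalRange_subset_closure_of_dense (A : E →L[𝕜] E) {D : Set E} (hD : Dense D)
    (hsmul : ∀ x ∈ D, ∀ c : 𝕜, c • x ∈ D) :
    numericalRange A ⊆ closure {z | ∃ x ∈ D, ‖x‖ = 1 ∧ ⟪x, A x⟫_𝕜 = z} := by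
  rintro _ ⟨x, hx1, rfl⟩
  have hx : x ≠ 0 := ne_zero_of_norm_ne_zero (hx1 ▸ one_ne_zero)
  have hcont : ContinuousAt (fun y => ⟪y, A y⟫_𝕜 / (‖y‖ : 𝕜) ^ 2) x :=
    ContinuousAt.div (by fun_prop) (by fun_prop) (by simpa using hx)
  have hxD : x ∈ closure ({0}ᶜ ∩ D) := hD.open_subset_closure_inter isOpen_compl_singleton hx
  refine closure_mono ?_ (by simpa [hx1] using mem_closure_image hcont hxD)
  rintro _ ⟨y, ⟨hy0, hyD⟩, rfl⟩
  exact ⟨_, hsmul y hyD _, norm_smul_inv_norm hy0, inner_smul_inv_norm_apply A y⟩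

end NumericalRange

lemma exists_eqOn_of_mem_closure {ι X : Type*} [TopologicalSpace X] [T1Space X] {S : Set X}
    (hS : S.Finite) {T : Set (ι → X)} (hT : ∀ g ∈ T, ∀ i, g i ∈ S) {f : ι → X}
    (hf : f ∈ closure T) (G : Finset ι) : ∃ g ∈ T, Set.EqOn f g G := by
  let π : (ι → X) → (G → X) := fun g j => g j
  have hfin : (π '' T).Finite :=
    (Set.Finite.pi fun _ => hS).subset (by rintro _ ⟨g, hg, rfl⟩ j -; exact hT g hg j)
  obtain ⟨g, hg, hfg⟩ : π f ∈ π '' T :=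
    hfin.isClosed.closure_eq ▸ image_closure_subset_closure_image (by fun_prop) ⟨f, hf, rfl⟩
  exact ⟨g, hg, fun j hj => (congrFun hfg ⟨j, hj⟩).symm⟩

lemma lp.dense_setOf_finite_support {α : Type*} {E : α → Type*} [∀ i, NormedAddCommGroup (E i)]
    {p : ℝ≥0∞} [Fact (1 ≤ p)] (hp : p ≠ ⊤) : Dense {f : lp E p | {i | f i ≠ 0}.Finite} := by
  classical
  intro f
  refine mem_closure_of_tendsto (lp.hasSum_single hp f) (Eventually.of_forall fun s => ?_)
  refine s.finite_toSet.subset fun i hi => ?_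
  by_contra his
  refine hi ?_
  rw [lp.coeFn_sum, Finset.sum_apply]
  exact Finset.sum_eq_zero fun j hj => lp.single_apply_ne p j _ (ne_of_mem_of_not_mem hj his).symm

namespace Hseq

def shift (n : ℤ) (x : Hseq) : Hseq :=
  ⟨fun i => x (i - n), (memℓp_gen_iff (by norm_num)).2 <|
    (Equiv.subRight n).summable_iff.2 ((memℓp_gen_iff (by norm_num)).1 x.2)⟩

lemma coe_shift (n : ℤ) (x : Hseq) : ⇑(shift n x) = fun i => x (i - n) := rfl

lemma norm_shift (n : ℤ) (x : Hseq) : ‖shift n x‖ = ‖x‖ := by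
  rw [lp.norm_eq_tsum_rpow (by norm_num), lp.norm_eq_tsum_rpow (by norm_num)]
  exact congrArg (· ^ _) ((Equiv.subRight n).tsum_eq fun i => ‖x i‖ ^ _)

end Hseq

def tridiagForm (c x : ℤ → ℂ) : ℂ :=
  ∑' j, conj (x j) * (x (j + 1) + c (j - 1) * x (j - 1))

lemma IsTridiag.inner_self_apply {c : ℤ → ℂ} {A : Hseq →L[ℂ] Hseq} (hA : IsTridiag c A)
    (x : Hseq) : ⟪x, A x⟫_ℂ = tridiagForm c x := by
  rw [lp.inner_eq_tsum]
  refine tsum_congr fun j => ?_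
  rw [hA x j]
  exact RCLike.inner_apply' _ _

lemma tridiagForm_congr {c c' x : ℤ → ℂ} (h : ∀ j, x j ≠ 0 → c (j - 1) = c' (j - 1)) :
    tridiagForm c x = tridiagForm c' x := by
  refine tsum_congr fun j => ?_
  by_cases hj : x j = 0
  · simp [hj]
  · rw [h j hj]

lemma tridiagForm_shift (c x : ℤ → ℂ) (n : ℤ) :
    tridiagForm c (fun i => x (i - n)) = tridiagForm (fun i => c (i + n)) x := by
  rw [tridiagForm, ← (Equiv.addRight n).tsum_eq]
  refine tsum_congr fun k => ?_
  simp only [Equiv.coe_addRight, add_sub_cancel_right, add_right_comm k n, sub_add_eq_add_sub,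
    sub_right_comm _ (1 : ℤ) n]

lemma numRange_subset_closure_of_mem_closure_shiftOrbit {𝒜 : Set ℂ} (h𝒜 : 𝒜.Finite)
    {b : ℤ → ℂ} (hb : ∀ i, b i ∈ 𝒜) {Ab : Hseq →L[ℂ] Hseq} (hAb : IsTridiag b Ab)
    {d : ℤ → ℂ} (hd : d ∈ closure (shiftOrbit b)) {Ad : Hseq →L[ℂ] Hseq}
    (hAd : IsTridiag d Ad) : numRange Ad ⊆ closure (numRange Ab) := by
  refine (numericalRange_subset_closure_of_dense Ad (lp.dense_setOf_finite_support (by norm_num))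
    fun x hx c => hx.subset fun i hi hxi => hi (by simp [hxi])).trans (closure_mono ?_)
  rintro _ ⟨x, hxfin, hx1, rfl⟩
  obtain ⟨_, ⟨n, rfl⟩, hn⟩ := exists_eqOn_of_mem_closure h𝒜
    (by rintro _ ⟨m, rfl⟩ i; exact hb _) hd (hxfin.toFinset.image (· - 1))
  refine ⟨Hseq.shift n x, (Hseq.norm_shift n x).trans hx1, ?_⟩
  rw [hAb.inner_self_apply, hAd.inner_self_apply, Hseq.coe_shift, tridiagForm_shift]
  exact (tridiagForm_congr fun j hj =>
    hn (Finset.mem_image_of_mem _ (hxfin.mem_toFinset.2 hj))).symm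

/-- If `d` belongs to `X_b`, the closure of the shift orbit of `b` (entries in a
finite alphabet `𝒜 ⊆ ℂ`), then `W(A_d) ⊆ closure (W(A_b))` and
`σ(A_d) ⊆ closure (W(A_b))`. -/
theorem stmt12 (𝒜 : Finset ℂ) (b : ℤ → ℂ) (hb : ∀ i, b i ∈ 𝒜)
    (Ab : Hseq →L[ℂ] Hseq) (hAb : IsTridiag b Ab)
    (d : ℤ → ℂ) (hd : d ∈ closure (shiftOrbit b))
    (Ad : Hseq →L[ℂ] Hseq) (hAd : IsTridiag d Ad) :
    numRange Ad ⊆ closure (numRange Ab) ∧ spectrum ℂ Ad ⊆ closure (numRange Ab) := by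
  have hW := numRange_subset_closure_of_mem_closure_shiftOrbit 𝒜.finite_toSet hb hAb hd hAd
  exact ⟨hW, (spectrum_subset_closure_numericalRange Ad).trans (closure_minimal hW isClosed_closure)⟩
end
end

section
/- Let 𝒜 be a finite set of complex numbers and let b be a biinfinite sequence with entries in 𝒜. Then the union over all d ∈ X_b of the closures of the numerical ranges of A_d equals the closure of the numerical range of A_b: ⋃_{d ∈ X_b} closure(W(A_d)) = closure(W(A_b)). -/
open scoped ComplexConjugate ENNReal
open Filter

noncomputable section

/-! Translating a vector by `n` intertwines `A_b` with `A_{φⁿ b}`, so `W(A_c) ⊆ W(A_b)` for every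
`c` in the orbit of `b`. For `d` in the orbit closure, every point of `W(A_d)` is a limit of values
`⟪y, A_d y⟫` with `y` a finitely supported unit vector. Such a value involves only finitely many
entries of `d`, so it depends continuously on `d` in the product topology and is a limit of the
values `⟪y, A_c y⟫` with `c` in the orbit. -/

open scoped InnerProductSpace

section Dense

variable {𝕜 E : Type*} [RCLike 𝕜] [NormedAddCommGroup E] [InnerProductSpace 𝕜 E]

theorem inner_apply_self_mem_closure_of_dense (T : E →L[𝕜] E) {D : Set E} (hD : Dense D)
    (hsmul : ∀ (c : 𝕜) y, y ∈ D → c • y ∈ D) {x : E} (hx : ‖x‖ = 1) :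
    ⟪x, T x⟫_𝕜 ∈ closure ((fun y => ⟪y, T y⟫_𝕜) '' (D ∩ Metric.sphere 0 1)) := by
  let normalize : E → E := fun y => ((‖y‖ : 𝕜))⁻¹ • y
  have hx0 : x ≠ 0 := ne_zero_of_norm_ne_zero (by simp [hx])
  have hxD : x ∈ closure ({0}ᶜ ∩ D) :=
    hD.open_subset_closure_inter isOpen_compl_singleton hx0
  have hnormalize : ContinuousAt normalize x :=
    ((RCLike.continuous_ofReal.comp continuous_norm).continuousAt.inv₀ (by simp [hx])).smul
      continuousAt_id
  have hmem := (hnormalize.inner (𝕜 := 𝕜) (T.continuous.continuousAt.comp hnormalize))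
    |>.continuousWithinAt.mem_closure_image hxD
  simp only [normalize, Function.comp_apply, hx, RCLike.ofReal_one, inv_one, one_smul] at hmem
  refine closure_mono ?_ hmem
  rintro _ ⟨y, ⟨hy0, hyD⟩, rfl⟩
  have hy : ‖y‖ ≠ 0 := norm_ne_zero_iff.2 hy0
  exact ⟨normalize y, ⟨hsmul _ _ hyD, by simp [normalize, norm_smul, hy]⟩, rfl⟩

end Dense

namespace lp

section FiniteSupport

variable {α : Type*} {E : α → Type*} [∀ i, NormedAddCommGroup (E i)] {p : ℝ≥0∞}

theorem dense_setOf_finite_support_s13 [Fact (1 ≤ p)] (hp : p ≠ ⊤) :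
    Dense {f : lp E p | ∃ s : Finset α, ∀ i ∉ s, f i = 0} := by
  classical
  intro f
  refine mem_closure_of_tendsto (lp.hasSum_single hp f) (Eventually.of_forall fun s => ⟨s, ?_⟩)
  intro i hi
  rw [lp.coeFn_sum, Finset.sum_apply]
  exact Finset.sum_eq_zero fun j hj => lp.single_apply_ne p j _ fun h => hi (h ▸ hj)

end FiniteSupport

section Reindex

variable {𝕜 : Type*} [RCLike 𝕜] {α β : Type*} {E : Type*} [NormedAddCommGroup E]
  [InnerProductSpace 𝕜 E]

theorem memℓp_two_comp_equiv (e : β ≃ α) (f : lp (fun _ : α => E) 2) :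
    Memℓp (f ∘ e) 2 := by
  have hp : 0 < (2 : ℝ≥0∞).toReal := by norm_num
  exact (memℓp_gen_iff hp).2 <|
    (e.summable_iff (f := fun i => ‖f i‖ ^ (2 : ℝ≥0∞).toReal)).2 ((memℓp_gen_iff hp).1 f.2)

variable (𝕜 E) in
def compEquiv (e : β ≃ α) : lp (fun _ : α => E) 2 →ₗᵢ[𝕜] lp (fun _ : β => E) 2 :=
  LinearMap.isometryOfInner
    { toFun := fun f => ⟨f ∘ e, memℓp_two_comp_equiv e f⟩
      map_add' := fun _ _ => rfl
      map_smul' := fun _ _ => rfl }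
    fun f g => by
      simp only [lp.inner_eq_tsum]
      exact e.tsum_eq fun i => ⟪f i, g i⟫_𝕜

@[simp]
theorem compEquiv_apply (e : β ≃ α) (f : lp (fun _ : α => E) 2) (i : β) :
    compEquiv 𝕜 E e f i = f (e i) :=
  rfl

end Reindex

end lp

theorem self_mem_closure_shiftOrbit (b : ℤ → ℂ) : b ∈ closure (shiftOrbit b) :=
  subset_closure ⟨0, by simp⟩

namespace IsTridiag

variable {b : ℤ → ℂ} {A : Hseq →L[ℂ] Hseq}

theorem inner_apply_self_eq_sum (hA : IsTridiag b A) {y : Hseq} {S : Finset ℤ}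
    (hy : ∀ j ∉ S, y j = 0) :
    ⟪y, A y⟫_ℂ = ∑ j ∈ S, conj (y j) * (y (j + 1) + b (j - 1) * y (j - 1)) := by
  rw [lp.inner_eq_tsum, tsum_eq_sum fun j hj => by simp [hy j hj]]
  refine Finset.sum_congr rfl fun j _ => ?_
  rw [RCLike.inner_apply, hA y j, mul_comm]

theorem apply_compEquiv_subRight {n : ℤ} {B : Hseq →L[ℂ] Hseq} (hA : IsTridiag b A)
    (hB : IsTridiag (fun i => b (i + n)) B) (x : Hseq) :
    A (lp.compEquiv ℂ ℂ (Equiv.subRight n) x) = lp.compEquiv ℂ ℂ (Equiv.subRight n) (B x) := by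
  ext j
  simp only [hA _ j, hB _ (j - n), lp.compEquiv_apply, Equiv.subRight_apply]
  ring_nf

theorem numRange_shift_subset {n : ℤ} {B : Hseq →L[ℂ] Hseq} (hA : IsTridiag b A)
    (hB : IsTridiag (fun i => b (i + n)) B) : numRange B ⊆ numRange A := by
  rintro _ ⟨x, hx, rfl⟩
  let U := lp.compEquiv ℂ ℂ (Equiv.subRight n)
  exact ⟨U x, by rw [U.norm_map, hx], by rw [hA.apply_compEquiv_subRight hB, U.inner_map_map]⟩

end IsTridiag

theorem numRange_subset_closure_numRange_of_mem_closure_shiftOrbit {b d : ℤ → ℂ}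
    {A : (ℤ → ℂ) → Hseq →L[ℂ] Hseq} (hA : ∀ d ∈ closure (shiftOrbit b), IsTridiag d (A d))
    (hd : d ∈ closure (shiftOrbit b)) : numRange (A d) ⊆ closure (numRange (A b)) := by
  rintro _ ⟨x, hx, rfl⟩
  have hsmul (c : ℂ) (y : Hseq) : (∃ S : Finset ℤ, ∀ j ∉ S, y j = 0) →
      ∃ S : Finset ℤ, ∀ j ∉ S, (c • y) j = 0 :=
    fun ⟨S, hS⟩ => ⟨S, fun j hj => by simp [hS j hj]⟩
  refine closure_minimal ?_ isClosed_closure <| inner_apply_self_mem_closure_of_dense (A d)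
    (lp.dense_setOf_finite_support_s13 (by norm_num)) hsmul hx
  rintro _ ⟨y, ⟨⟨S, hS⟩, hy⟩, rfl⟩
  let F : (ℤ → ℂ) → ℂ := fun e => ∑ j ∈ S, conj (y j) * (y (j + 1) + e (j - 1) * y (j - 1))
  have hF : Continuous F := by fun_prop
  show ⟪y, A d y⟫_ℂ ∈ _
  rw [(hA d hd).inner_apply_self_eq_sum hS]
  refine map_mem_closure (f := F) hF hd ?_
  rintro _ ⟨n, rfl⟩
  have hc := hA _ (subset_closure ⟨n, rfl⟩)
  have hmem := (hA b (self_mem_closure_shiftOrbit b)).numRange_shift_subset hc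
    ⟨y, by simpa using hy, rfl⟩
  rwa [hc.inner_apply_self_eq_sum hS] at hmem

theorem stmt13_general (b : ℤ → ℂ)
    (A : (ℤ → ℂ) → Hseq →L[ℂ] Hseq)
    (hA : ∀ d ∈ closure (shiftOrbit b), IsTridiag d (A d)) :
    ⋃ d ∈ closure (shiftOrbit b), closure (numRange (A d)) = closure (numRange (A b)) := by
  refine subset_antisymm (Set.iUnion₂_subset fun d hd => ?_) ?_
  · exact closure_minimal (numRange_subset_closure_numRange_of_mem_closure_shiftOrbit hA hd)
      isClosed_closure
  · exact Set.subset_iUnion₂ (s := fun d _ => closure (numRange (A d))) b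
      (self_mem_closure_shiftOrbit b)

/-- `⋃_{d ∈ X_b} closure (W(A_d)) = closure (W(A_b))`, where `X_b` is the closure of
the shift orbit of `b` and `b` has entries in the finite alphabet `𝒜 ⊆ ℂ`.
(The family `A` assigns to each `d ∈ X_b` its tridiagonal operator `A_d`;
note `b ∈ X_b`.) -/
theorem stmt13 (𝒜 : Finset ℂ) (b : ℤ → ℂ) (hb : ∀ i, b i ∈ 𝒜)
    (A : (ℤ → ℂ) → Hseq →L[ℂ] Hseq)
    (hA : ∀ d ∈ closure (shiftOrbit b), IsTridiag d (A d)) :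
    ⋃ d ∈ closure (shiftOrbit b), closure (numRange (A d)) = closure (numRange (A b)) :=
  stmt13_general b A hA
end
end
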